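/- Under the factor-model setup, the squared correlation between the model prediction and the proxy-horizon return satisfies Cov(ŷ, rδ)² / (Var(ŷ) · Var(rδ)) = α_δ⁴ / ((α_δ² + d·v) · (α_δ² + σδ²)); in particular Cov(ŷ, rδ) = α_δ². -/

import Mathlib

/-!
The prediction is a linear form `∑ aᵢ sᵢ` in the whitened features with random coefficients
`aᵢ = α wᵢ + zᵢ` independent of `s`. Independence factors `E[aᵢ bⱼ sᵢ sⱼ] = E[aᵢ bⱼ] δᵢⱼ`, so
the second moment of a product of two such forms collapses to `∑ E[aᵢ bᵢ]`; the centred noise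
`εδ`, independent of `(s, z)`, contributes only its own variance. Hence `Cov(ŷ, rδ) = α²‖w‖²`,
`Var ŷ = α²‖w‖² + d v` and `Var rδ = α²‖w‖² + σδ²`.
-/

open MeasureTheory ProbabilityTheory

section

variable {Ω : Type*} [MeasurableSpace Ω] {μ : Measure Ω}

theorem ProbabilityTheory.IndepFun.memLp_two_mul {X Y : Ω → ℝ} (hXY : IndepFun X Y μ)
    (hX : MemLp X 2 μ) (hY : MemLp Y 2 μ) : MemLp (fun ω => X ω * Y ω) 2 μ := by
  have hsq : IndepFun (fun ω => X ω ^ 2) (fun ω => Y ω ^ 2) μ :=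
    hXY.comp (measurable_id.pow_const 2) (measurable_id.pow_const 2)
  have h : Integrable (fun ω => X ω ^ 2 * Y ω ^ 2) μ :=
    hsq.integrable_mul hX.integrable_sq hY.integrable_sq
  refine (memLp_two_iff_integrable_sq (hX.1.mul hY.1)).2 ?_
  simpa only [Pi.mul_apply, mul_pow] using h

theorem integral_mul_eq_zero_of_indepFun {X Y : Ω → ℝ} (hXY : IndepFun X Y μ)
    (hX : AEStronglyMeasurable X μ) (hY : AEStronglyMeasurable Y μ) (hY0 : ∫ ω, Y ω ∂μ = 0) :
    ∫ ω, X ω * Y ω ∂μ = 0 := by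
  rw [hXY.integral_fun_mul_eq_mul_integral hX hY, hY0, mul_zero]

theorem integral_mul_add_of_indepFun {X Y Z : Ω → ℝ} (hXY : IndepFun X Y μ)
    (hX : MemLp X 2 μ) (hY : MemLp Y 2 μ) (hZ : MemLp Z 2 μ) (hY0 : ∫ ω, Y ω ∂μ = 0) :
    ∫ ω, X ω * (Z ω + Y ω) ∂μ = ∫ ω, X ω * Z ω ∂μ := by
  have hXZ : Integrable (fun ω => X ω * Z ω) μ := hX.integrable_mul hZ
  have hXY_int : Integrable (fun ω => X ω * Y ω) μ := hX.integrable_mul hY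
  simp_rw [mul_add]
  rw [integral_add hXZ hXY_int, integral_mul_eq_zero_of_indepFun hXY hX.1 hY.1 hY0, add_zero]

theorem integral_add_sq_of_indepFun {X Y : Ω → ℝ} (hXY : IndepFun X Y μ)
    (hX : MemLp X 2 μ) (hY : MemLp Y 2 μ) (hY0 : ∫ ω, Y ω ∂μ = 0) :
    ∫ ω, (X ω + Y ω) ^ 2 ∂μ = ∫ ω, X ω ^ 2 ∂μ + ∫ ω, Y ω ^ 2 ∂μ := by
  have hX2 : Integrable (fun ω => X ω ^ 2) μ := hX.integrable_sq
  have hY2 : Integrable (fun ω => Y ω ^ 2) μ := hY.integrable_sq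
  have hXY2 : Integrable (fun ω => 2 * (X ω * Y ω)) μ := (hX.integrable_mul hY).const_mul 2
  simp_rw [add_sq', mul_assoc]
  rw [integral_add (by fun_prop) hXY2, integral_add hX2 hY2, integral_const_mul,
    integral_mul_eq_zero_of_indepFun hXY hX.1 hY.1 hY0, mul_zero, add_zero]

theorem integral_const_add_mul_const_add [IsProbabilityMeasure μ] {X Y : Ω → ℝ}
    (hX : MemLp X 2 μ) (hY : MemLp Y 2 μ) (hX0 : ∫ ω, X ω ∂μ = 0) (hY0 : ∫ ω, Y ω ∂μ = 0)
    (c c' : ℝ) :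
    ∫ ω, (c + X ω) * (c' + Y ω) ∂μ = c * c' + ∫ ω, X ω * Y ω ∂μ := by
  have hexp : ∀ ω, (c + X ω) * (c' + Y ω) = c * c' + (c * Y ω + (c' * X ω + X ω * Y ω)) :=
    fun ω => by ring
  have hcY : Integrable (fun ω => c * Y ω) μ := (hY.integrable one_le_two).const_mul c
  have hcX : Integrable (fun ω => c' * X ω) μ := (hX.integrable one_le_two).const_mul c'
  have hXY : Integrable (fun ω => X ω * Y ω) μ := hX.integrable_mul hY
  simp_rw [hexp]
  rw [integral_add (integrable_const _) (by fun_prop), integral_add hcY (by fun_prop),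
    integral_add hcX hXY, integral_const, integral_const_mul, integral_const_mul, hX0, hY0]
  simp

variable {ι : Type*} [Fintype ι] {s z : Ω → ι → ℝ} (w : ι → ℝ) (α : ℝ)

theorem memLp_sum_add_mul_of_indepFun [IsFiniteMeasure μ] (hind : IndepFun z s μ)
    (hs : ∀ i, MemLp (fun ω => s ω i) 2 μ) (hz : ∀ i, MemLp (fun ω => z ω i) 2 μ) :
    MemLp (fun ω => ∑ i, (α * w i + z ω i) * s ω i) 2 μ := by
  refine memLp_finsetSum (f := fun i ω => (α * w i + z ω i) * s ω i) _ fun i _ =>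
    IndepFun.memLp_two_mul ?_ ((memLp_const (α * w i)).add (hz i)) (hs i)
  exact hind.comp (φ := fun x : ι → ℝ => α * w i + x i) (ψ := fun x : ι → ℝ => x i)
    (by fun_prop) (by fun_prop)

variable [DecidableEq ι]

theorem integral_sum_mul_sum_of_indepFun {a b : Ω → ι → ℝ}
    (hind : IndepFun (fun ω => (a ω, b ω)) s μ)
    (ha : ∀ i, MemLp (fun ω => a ω i) 2 μ) (hb : ∀ i, MemLp (fun ω => b ω i) 2 μ)
    (hs : ∀ i, MemLp (fun ω => s ω i) 2 μ)
    (hscov : ∀ i j, ∫ ω, s ω i * s ω j ∂μ = if i = j then 1 else 0) :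
    ∫ ω, (∑ i, a ω i * s ω i) * (∑ j, b ω j * s ω j) ∂μ = ∑ i, ∫ ω, a ω i * b ω i ∂μ := by
  have hind_ij : ∀ i j, IndepFun (fun ω => a ω i * b ω j) (fun ω => s ω i * s ω j) μ :=
    fun i j => hind.comp (φ := fun p : (ι → ℝ) × (ι → ℝ) => p.1 i * p.2 j)
      (ψ := fun x : ι → ℝ => x i * x j) (by fun_prop) (by fun_prop)
  have hint : ∀ i j, Integrable (fun ω => (a ω i * b ω j) * (s ω i * s ω j)) μ := fun i j =>
    (hind_ij i j).integrable_mul ((ha i).integrable_mul (hb j)) ((hs i).integrable_mul (hs j))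
  have hterm : ∀ i j, ∫ ω, (a ω i * b ω j) * (s ω i * s ω j) ∂μ
      = if i = j then ∫ ω, a ω i * b ω i ∂μ else 0 := by
    intro i j
    rw [(hind_ij i j).integral_fun_mul_eq_mul_integral ((ha i).1.mul (hb j).1)
      ((hs i).1.mul (hs j).1), hscov]
    split_ifs with h
    · rw [h, mul_one]
    · rw [mul_zero]
  calc ∫ ω, (∑ i, a ω i * s ω i) * (∑ j, b ω j * s ω j) ∂μ
      = ∫ ω, ∑ i, ∑ j, (a ω i * b ω j) * (s ω i * s ω j) ∂μ := by
        simp_rw [Finset.sum_mul_sum, mul_mul_mul_comm]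
    _ = ∑ i, ∑ j, ∫ ω, (a ω i * b ω j) * (s ω i * s ω j) ∂μ := by
        rw [integral_finsetSum _ fun i _ => integrable_finsetSum _ fun j _ => hint i j]
        exact Finset.sum_congr rfl fun i _ => integral_finsetSum _ fun j _ => hint i j
    _ = ∑ i, ∫ ω, a ω i * b ω i ∂μ := by
        simp only [hterm, Finset.sum_ite_eq, Finset.mem_univ, if_true]

variable [IsProbabilityMeasure μ]

theorem integral_const_mul_sum_mul_sq (hs : ∀ i, MemLp (fun ω => s ω i) 2 μ)
    (hscov : ∀ i j, ∫ ω, s ω i * s ω j ∂μ = if i = j then 1 else 0) :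
    ∫ ω, (α * ∑ i, w i * s ω i) ^ 2 ∂μ = α ^ 2 * ∑ i, w i ^ 2 := by
  have hc : ∀ i, MemLp (fun _ : Ω => α * w i) 2 μ := fun i => memLp_const _
  have hlin : ∀ ω, α * ∑ i, w i * s ω i = ∑ i, α * w i * s ω i := fun ω => by
    simp only [Finset.mul_sum, mul_assoc]
  simp_rw [hlin, sq]
  rw [integral_sum_mul_sum_of_indepFun (a := fun _ i => α * w i) (b := fun _ i => α * w i)
    (indepFun_const_left _ s) hc hc hs hscov]
  simp only [integral_const, probReal_univ, one_smul, Finset.mul_sum]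
  exact Finset.sum_congr rfl fun i _ => by ring

theorem integral_sum_add_mul_mul_const_mul_sum (hind : IndepFun z s μ)
    (hs : ∀ i, MemLp (fun ω => s ω i) 2 μ) (hz : ∀ i, MemLp (fun ω => z ω i) 2 μ)
    (hscov : ∀ i j, ∫ ω, s ω i * s ω j ∂μ = if i = j then 1 else 0)
    (hz0 : ∀ i, ∫ ω, z ω i ∂μ = 0) :
    ∫ ω, (∑ i, (α * w i + z ω i) * s ω i) * (α * ∑ i, w i * s ω i) ∂μ
      = α ^ 2 * ∑ i, w i ^ 2 := by
  have hc : ∀ i, MemLp (fun _ : Ω => α * w i) 2 μ := fun i => memLp_const _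
  have ha : ∀ i, MemLp (fun ω => α * w i + z ω i) 2 μ :=
    fun i => (memLp_const (α * w i)).add (hz i)
  have hmean : ∀ i, ∫ ω, α * w i + z ω i ∂μ = α * w i := fun i => by
    rw [integral_add (integrable_const _) ((hz i).integrable one_le_two), hz0, integral_const]
    simp
  have hlin : ∀ ω, α * ∑ i, w i * s ω i = ∑ i, α * w i * s ω i := fun ω => by
    simp only [Finset.mul_sum, mul_assoc]
  simp only [hlin]
  rw [integral_sum_mul_sum_of_indepFun (s := s) (a := fun ω i => α * w i + z ω i)
    (b := fun _ i => α * w i)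
    (hind.comp (φ := fun x : ι → ℝ => (fun i => α * w i + x i, fun i => α * w i)) (ψ := id)
      (by fun_prop) measurable_id) ha hc hs hscov]
  simp only [integral_mul_const, hmean, Finset.mul_sum]
  exact Finset.sum_congr rfl fun i _ => by ring

theorem integral_sum_add_mul_sq {v : ℝ} (hind : IndepFun z s μ)
    (hs : ∀ i, MemLp (fun ω => s ω i) 2 μ) (hz : ∀ i, MemLp (fun ω => z ω i) 2 μ)
    (hscov : ∀ i j, ∫ ω, s ω i * s ω j ∂μ = if i = j then 1 else 0)
    (hz0 : ∀ i, ∫ ω, z ω i ∂μ = 0) (hzvar : ∀ i, ∫ ω, z ω i * z ω i ∂μ = v) :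
    ∫ ω, (∑ i, (α * w i + z ω i) * s ω i) ^ 2 ∂μ
      = α ^ 2 * ∑ i, w i ^ 2 + Fintype.card ι * v := by
  have ha : ∀ i, MemLp (fun ω => α * w i + z ω i) 2 μ :=
    fun i => (memLp_const (α * w i)).add (hz i)
  have hsecond : ∀ i, ∫ ω, (α * w i + z ω i) * (α * w i + z ω i) ∂μ = α ^ 2 * w i ^ 2 + v :=
    fun i => by rw [integral_const_add_mul_const_add (hz i) (hz i) (hz0 i) (hz0 i), hzvar]; ring
  simp_rw [sq (∑ i, _)]
  rw [integral_sum_mul_sum_of_indepFun (s := s) (a := fun ω i => α * w i + z ω i)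
    (b := fun ω i => α * w i + z ω i)
    (hind.comp (φ := fun x : ι → ℝ => (fun i => α * w i + x i, fun i => α * w i + x i))
      (ψ := id) (by fun_prop) measurable_id) ha ha hs hscov]
  simp only [hsecond, Finset.sum_add_distrib, Finset.mul_sum, Finset.sum_const, Finset.card_univ,
    nsmul_eq_mul]

end

theorem squared_correlation_proxy_general
    {Ω : Type*} [MeasurableSpace Ω] (μ : Measure Ω) [IsProbabilityMeasure μ]
    {d : ℕ}
    (w : Fin d → ℝ) (hw : ∑ i, w i ^ 2 = 1)
    (αδ v σδsq : ℝ)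
    (s z : Ω → Fin d → ℝ) (ε : Ω → ℝ)
    (hs2 : ∀ i, MemLp (fun ω => s ω i) 2 μ)
    (hz2 : ∀ i, MemLp (fun ω => z ω i) 2 μ)
    (hε2 : MemLp ε 2 μ)
    (hscov : ∀ i j, ∫ ω, s ω i * s ω j ∂μ = if i = j then 1 else 0)
    (hz0 : ∀ i, ∫ ω, z ω i ∂μ = 0)
    (hzcov : ∀ i j, ∫ ω, z ω i * z ω j ∂μ = if i = j then v else 0)
    (hε0 : ∫ ω, ε ω ∂μ = 0)
    (hεvar : ∫ ω, ε ω ^ 2 ∂μ = σδsq)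
    (hindep_sz : IndepFun s z μ)
    (hindep_ε : IndepFun (fun ω => (s ω, z ω)) ε μ) :
    (∫ ω, (∑ i, (αδ * w i + z ω i) * s ω i) * (αδ * (∑ i, w i * s ω i) + ε ω) ∂μ
        = αδ ^ 2)
    ∧ (∫ ω, (∑ i, (αδ * w i + z ω i) * s ω i) * (αδ * (∑ i, w i * s ω i) + ε ω) ∂μ) ^ 2
        / ((∫ ω, (∑ i, (αδ * w i + z ω i) * s ω i) ^ 2 ∂μ)
           * (∫ ω, (αδ * (∑ i, w i * s ω i) + ε ω) ^ 2 ∂μ))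
      = αδ ^ 4 / ((αδ ^ 2 + d * v) * (αδ ^ 2 + σδsq)) := by
  have hz : IndepFun z s μ := hindep_sz.symm
  have hŷ2 := memLp_sum_add_mul_of_indepFun w αδ hz hs2 hz2
  have hT2 : MemLp (fun ω => αδ * ∑ i, w i * s ω i) 2 μ :=
    (memLp_finsetSum (f := fun i ω => w i * s ω i) _ fun i _ =>
      (hs2 i).const_mul (w i)).const_mul αδ
  have hŷε : IndepFun (fun ω => ∑ i, (αδ * w i + z ω i) * s ω i) ε μ :=
    hindep_ε.comp (φ := fun p : (Fin d → ℝ) × (Fin d → ℝ) => ∑ i, (αδ * w i + p.2 i) * p.1 i)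
      (by fun_prop) measurable_id
  have hTε : IndepFun (fun ω => αδ * ∑ i, w i * s ω i) ε μ :=
    hindep_ε.comp (φ := fun p : (Fin d → ℝ) × (Fin d → ℝ) => αδ * ∑ i, w i * p.1 i)
      (by fun_prop) measurable_id
  have hcov : ∫ ω, (∑ i, (αδ * w i + z ω i) * s ω i) * (αδ * (∑ i, w i * s ω i) + ε ω) ∂μ
      = αδ ^ 2 := by
    rw [integral_mul_add_of_indepFun hŷε hŷ2 hε2 hT2 hε0,
      integral_sum_add_mul_mul_const_mul_sum w αδ hz hs2 hz2 hscov hz0, hw, mul_one]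
  have hvarŷ : ∫ ω, (∑ i, (αδ * w i + z ω i) * s ω i) ^ 2 ∂μ = αδ ^ 2 + d * v := by
    rw [integral_sum_add_mul_sq w αδ hz hs2 hz2 hscov hz0
      (fun i => (hzcov i i).trans (if_pos rfl)), hw, mul_one, Fintype.card_fin]
  have hvarr : ∫ ω, (αδ * (∑ i, w i * s ω i) + ε ω) ^ 2 ∂μ = αδ ^ 2 + σδsq := by
    rw [integral_add_sq_of_indepFun hTε hT2 hε2 hε0, integral_const_mul_sum_mul_sq w αδ hs2 hscov,
      hw, mul_one, hεvar]
  refine ⟨hcov, ?_⟩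
  rw [hcov, hvarŷ, hvarr]
  ring

/-- Under the factor-model setup, with prediction
`ŷ = Σ_i (α_δ·w_i + z_i)·s_i` and proxy-horizon return `rδ = α_δ·(Σ_i w_i·s_i) + εδ`,
the squared correlation satisfies
`Cov(ŷ, rδ)² / (Var(ŷ)·Var(rδ)) = α_δ⁴ / ((α_δ² + d·v)·(α_δ² + σδ²))`;
in particular `Cov(ŷ, rδ) = α_δ²`. -/
theorem squared_correlation_proxy
    {Ω : Type*} [MeasurableSpace Ω] (μ : Measure Ω) [IsProbabilityMeasure μ]
    {d : ℕ} (hd : 1 ≤ d)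
    (w : Fin d → ℝ) (hw : ∑ i, w i ^ 2 = 1)
    (αδ v σδsq : ℝ) (hαδ : 0 < αδ) (hv : 0 < v) (hσ : 0 < σδsq)
    (s z : Ω → Fin d → ℝ) (ε : Ω → ℝ)
    (hs_meas : Measurable s) (hz_meas : Measurable z) (hε_meas : Measurable ε)
    (hs2 : ∀ i, MemLp (fun ω => s ω i) 2 μ)
    (hz2 : ∀ i, MemLp (fun ω => z ω i) 2 μ)
    (hε2 : MemLp ε 2 μ)
    (hs0 : ∀ i, ∫ ω, s ω i ∂μ = 0)
    (hscov : ∀ i j, ∫ ω, s ω i * s ω j ∂μ = if i = j then 1 else 0)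
    (hz0 : ∀ i, ∫ ω, z ω i ∂μ = 0)
    (hzcov : ∀ i j, ∫ ω, z ω i * z ω j ∂μ = if i = j then v else 0)
    (hε0 : ∫ ω, ε ω ∂μ = 0)
    (hεvar : ∫ ω, ε ω ^ 2 ∂μ = σδsq)
    (hindep_sz : IndepFun s z μ)
    (hindep_ε : IndepFun (fun ω => (s ω, z ω)) ε μ) :
    (∫ ω, (∑ i, (αδ * w i + z ω i) * s ω i) * (αδ * (∑ i, w i * s ω i) + ε ω) ∂μ
        = αδ ^ 2)
    ∧ (∫ ω, (∑ i, (αδ * w i + z ω i) * s ω i) * (αδ * (∑ i, w i * s ω i) + ε ω) ∂μ) ^ 2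
        / ((∫ ω, (∑ i, (αδ * w i + z ω i) * s ω i) ^ 2 ∂μ)
           * (∫ ω, (αδ * (∑ i, w i * s ω i) + ε ω) ^ 2 ∂μ))
      = αδ ^ 4 / ((αδ ^ 2 + d * v) * (αδ ^ 2 + σδsq)) :=
  squared_correlation_proxy_general μ w hw αδ v σδsq s z ε hs2 hz2 hε2 hscov hz0 hzcov hε0 hεvar
    hindep_sz hindep_ε
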